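/- (Game-Theoretic Determinacy) Let φ be an ADIF formula, 𝕏 a hyperteam over a superset of sup(φ), and α ∈ {∃∀,∀∃} an alternation flag. Then: (1) either 𝔄, 𝕏 ⊨^α φ or 𝔄, 𝕏 ⊨^{α~} ¬φ, but not both; (2) either 𝔄, 𝕏 ⊨^α φ or 𝔄, 𝕏~ ⊨^α ¬φ, but not both. -/

import Mathlib

open scoped Classical

namespace ADIF

/-- A relational first-order structure over a signature given by relation
symbols `RSym` with arities `ar`. -/
structure Struct (RSym : Type) (ar : RSym → ℕ) where
  A : Type
  nonempty : Nonempty A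
  interp : ∀ R : RSym, (Fin (ar R) → A) → Prop

variable {Var RSym : Type} {ar : RSym → ℕ} {A : Type}

/-- Partial assignments from variables to values. -/
abbrev Asg (Var A : Type) := Var → Option A

/-- Teams of assignments. -/
abbrev Team (Var A : Type) := Set (Asg Var A)

/-- Hyperteams: sets of teams. -/
abbrev Hyperteam (Var A : Type) := Set (Team Var A)

/-- The empty assignment. -/
def emptyAsg (Var A : Type) : Asg Var A := fun _ => none

/-- Domain of a partial assignment. -/
def dom (α : Asg Var A) : Set Var := {v | α v ≠ none}

/-- Restriction of an assignment to a set of variables. -/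
noncomputable def restrictA (α : Asg Var A) (W : Set Var) : Asg Var A :=
  fun v => if v ∈ W then α v else none

/-- Restriction of a team. -/
noncomputable def restrictT (X : Team Var A) (W : Set Var) : Team Var A :=
  (fun α => restrictA α W) '' X

/-- Restriction of a hyperteam. -/
noncomputable def restrictH (𝕏 : Hyperteam Var A) (W : Set Var) : Hyperteam Var A :=
  (fun X => restrictT X W) '' 𝕏

/-- The preorder `⊑` on hyperteams. -/
def incl (𝕏₁ 𝕏₂ : Hyperteam Var A) : Prop :=
  ∀ X₁ ∈ 𝕏₁, ∃ X₂ ∈ 𝕏₂, X₂ ⊆ X₁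

/-- The equivalence `≡` on hyperteams. -/
def equivH (𝕏₁ 𝕏₂ : Hyperteam Var A) : Prop :=
  incl 𝕏₁ 𝕏₂ ∧ incl 𝕏₂ 𝕏₁

/-- The preorder `⊑_W` on hyperteams, relativized to variables in `W`. -/
noncomputable def inclW (W : Set Var) (𝕏₁ 𝕏₂ : Hyperteam Var A) : Prop :=
  incl (restrictH 𝕏₁ W) (restrictH 𝕏₂ W)

/-- The equivalence `≡_W` on hyperteams, relativized to variables in `W`. -/
noncomputable def equivW (W : Set Var) (𝕏₁ 𝕏₂ : Hyperteam Var A) : Prop :=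
  equivH (restrictH 𝕏₁ W) (restrictH 𝕏₂ W)

/-- The dual hyperteam `𝕏~`: the set of images of all choice functions for `𝕏`. -/
def dualH (𝕏 : Hyperteam Var A) : Hyperteam Var A :=
  {Y | ∃ χ : Team Var A → Asg Var A, (∀ X ∈ 𝕏, χ X ∈ X) ∧ Y = χ '' 𝕏}

/-- A hyperteam is proper if it is neither empty nor null. -/
def Proper (𝕏 : Hyperteam Var A) : Prop := 𝕏 ≠ ∅ ∧ ∅ ∉ 𝕏

/-- All assignments in all teams of `𝕏` are defined exactly on `U`. -/
def HyperteamOn (𝕏 : Hyperteam Var A) (U : Set Var) : Prop :=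
  ∀ X ∈ 𝕏, ∀ α ∈ X, dom α = U

/-- `𝕏` is a genuine hyperteam: all its assignments share the same domain. -/
def IsHyperteam (𝕏 : Hyperteam Var A) : Prop := ∃ U : Set Var, HyperteamOn 𝕏 U

/-- `𝕏` is a hyperteam over some superset of `V`. -/
def OverSup (𝕏 : Hyperteam Var A) (V : Set Var) : Prop :=
  ∃ U : Set Var, V ⊆ U ∧ HyperteamOn 𝕏 U

/-- `W`-uniform functions from assignments to values. -/
def FW (W : Set Var) : Set (Asg Var A → A) :=
  {F | ∀ α : Asg Var A, F α = F (restrictA α W)}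

/-- Update of an assignment at a variable. -/
noncomputable def updateA (α : Asg Var A) (x : Var) (a : A) : Asg Var A :=
  fun v => if v = x then some a else α v

/-- Extension of an assignment by a function for a variable. -/
noncomputable def extA (α : Asg Var A) (F : Asg Var A → A) (x : Var) : Asg Var A :=
  updateA α x (F α)

/-- Extension of a team by a function for a variable. -/
noncomputable def extT (X : Team Var A) (F : Asg Var A → A) (x : Var) : Team Var A :=
  (fun α => extA α F x) '' X

/-- Extension of a hyperteam with a variable, `W`-uniformly. -/
noncomputable def extH (W : Set Var) (𝕏 : Hyperteam Var A) (x : Var) : Hyperteam Var A :=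
  {Y | ∃ X ∈ 𝕏, ∃ F ∈ FW W, Y = extT X F x}

/-- Bipartitions of a hyperteam. -/
def Bipartition (𝕏₁ 𝕏₂ 𝕏 : Hyperteam Var A) : Prop :=
  𝕏₁ ∩ 𝕏₂ = ∅ ∧ 𝕏₁ ∪ 𝕏₂ = 𝕏

/-- Cylindrification of a team with respect to a variable. -/
noncomputable def cylT (X : Team Var A) (x : Var) : Team Var A :=
  {β | ∃ α ∈ X, ∃ a : A, β = updateA α x a}

/-- Cylindrification of a hyperteam with respect to a variable. -/
noncomputable def cylH (𝕏 : Hyperteam Var A) (x : Var) : Hyperteam Var A :=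
  (fun X => cylT X x) '' 𝕏

/-- ADIF formulas over variables `Var` and a relational signature. -/
inductive Formula (Var RSym : Type) (ar : RSym → ℕ) : Type
  | fls : Formula Var RSym ar
  | tru : Formula Var RSym ar
  | atom (R : RSym) (xs : Fin (ar R) → Var) : Formula Var RSym ar
  | not (φ : Formula Var RSym ar) : Formula Var RSym ar
  | and (φ ψ : Formula Var RSym ar) : Formula Var RSym ar
  | or (φ ψ : Formula Var RSym ar) : Formula Var RSym ar
  | ex (s : Bool) (W : Finset Var) (x : Var) (φ : Formula Var RSym ar) : Formula Var RSym ar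
  | all (s : Bool) (W : Finset Var) (x : Var) (φ : Formula Var RSym ar) : Formula Var RSym ar

/-- The constraint set `⟦±W⟧`: `W` itself for `+` (`s = true`),
its complement for `−` (`s = false`). -/
def denot (s : Bool) (W : Finset Var) : Set Var :=
  if s then (↑W : Set Var) else (↑W : Set Var)ᶜ

/-- Support variables of an ADIF formula. -/
def supv : Formula Var RSym ar → Set Var
  | .fls => ∅
  | .tru => ∅
  | .atom _ xs => Set.range xs
  | .not φ => supv φ
  | .and φ ψ => supv φ ∪ supv ψ
  | .or φ ψ => supv φ ∪ supv ψ
  | .ex _ _ x φ => supv φ \ {x}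
  | .all _ _ x φ => supv φ \ {x}

/-- Free variables of an ADIF formula. -/
noncomputable def freev : Formula Var RSym ar → Set Var
  | .fls => ∅
  | .tru => ∅
  | .atom _ xs => Set.range xs
  | .not φ => freev φ
  | .and φ ψ => freev φ ∪ freev ψ
  | .or φ ψ => freev φ ∪ freev ψ
  | .ex s W x φ => if x ∈ freev φ then (freev φ \ {x}) ∪ denot s W else freev φ
  | .all s W x φ => if x ∈ freev φ then (freev φ \ {x}) ∪ denot s W else freev φ

/-- Alternation flags. -/
inductive Flag : Type
  | EA : Flag
  | AE : Flag

/-- The dual alternation flag. -/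
def Flag.dual : Flag → Flag
  | .EA => .AE
  | .AE => .EA

/-- Satisfaction of an atom by a (partial) assignment. -/
def atomSat (𝔄 : Struct RSym ar) (R : RSym) (xs : Fin (ar R) → Var)
    (α : Asg Var 𝔄.A) : Prop :=
  ∃ v : Fin (ar R) → 𝔄.A, (∀ i, α (xs i) = some (v i)) ∧ 𝔄.interp R v

/-- Hodges' alternating satisfaction relation `𝔄, 𝕏 ⊨^fl φ` for ADIF. -/
noncomputable def sat (𝔄 : Struct RSym ar) :
    Formula Var RSym ar → Flag → Hyperteam Var 𝔄.A → Prop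
  | .fls, .EA, 𝕏 => ∅ ∈ 𝕏
  | .fls, .AE, 𝕏 => 𝕏 = ∅
  | .tru, .EA, 𝕏 => 𝕏 ≠ ∅
  | .tru, .AE, 𝕏 => ∅ ∉ 𝕏
  | .atom R xs, .EA, 𝕏 => ∃ X ∈ 𝕏, ∀ α ∈ X, atomSat 𝔄 R xs α
  | .atom R xs, .AE, 𝕏 => ∀ X ∈ 𝕏, ∃ α ∈ X, atomSat 𝔄 R xs α
  | .not φ, fl, 𝕏 => ¬ sat 𝔄 φ fl.dual 𝕏
  | .and φ ψ, .EA, 𝕏 =>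
      ∀ 𝕏₁ 𝕏₂, Bipartition 𝕏₁ 𝕏₂ 𝕏 → sat 𝔄 φ .EA 𝕏₁ ∨ sat 𝔄 ψ .EA 𝕏₂
  | .and φ ψ, .AE, 𝕏 =>
      ∀ 𝕏₁ 𝕏₂, Bipartition 𝕏₁ 𝕏₂ (dualH 𝕏) → sat 𝔄 φ .EA 𝕏₁ ∨ sat 𝔄 ψ .EA 𝕏₂
  | .or φ ψ, .AE, 𝕏 =>
      ∃ 𝕏₁ 𝕏₂, Bipartition 𝕏₁ 𝕏₂ 𝕏 ∧ sat 𝔄 φ .AE 𝕏₁ ∧ sat 𝔄 ψ .AE 𝕏₂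
  | .or φ ψ, .EA, 𝕏 =>
      ∃ 𝕏₁ 𝕏₂, Bipartition 𝕏₁ 𝕏₂ (dualH 𝕏) ∧ sat 𝔄 φ .AE 𝕏₁ ∧ sat 𝔄 ψ .AE 𝕏₂
  | .ex s W x φ, .EA, 𝕏 => sat 𝔄 φ .EA (extH (denot s W) 𝕏 x)
  | .ex s W x φ, .AE, 𝕏 => sat 𝔄 φ .EA (extH (denot s W) (dualH 𝕏) x)
  | .all s W x φ, .AE, 𝕏 => sat 𝔄 φ .AE (extH (denot s W) 𝕏 x)
  | .all s W x φ, .EA, 𝕏 => sat 𝔄 φ .AE (extH (denot s W) (dualH 𝕏) x)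

/-- `φ` is `fl`-satisfiable on `𝔄`: some proper hyperteam over `sup φ` satisfies it. -/
noncomputable def SatOn (𝔄 : Struct RSym ar) (fl : Flag) (φ : Formula Var RSym ar) : Prop :=
  ∃ 𝕏 : Hyperteam Var 𝔄.A, HyperteamOn 𝕏 (supv φ) ∧ Proper 𝕏 ∧ sat 𝔄 φ fl 𝕏

/-- `φ` is `fl`-satisfiable: `fl`-satisfiable on some structure. -/
noncomputable def Satisfiable (Var : Type) {RSym : Type} {ar : RSym → ℕ}
    (fl : Flag) (φ : Formula Var RSym ar) : Prop :=
  ∃ 𝔄 : Struct RSym ar, SatOn 𝔄 fl φ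

/-- `φ ⇛^fl ψ`: `fl`-implication between ADIF formulas. -/
noncomputable def ImpliesF (fl : Flag) (φ ψ : Formula Var RSym ar) : Prop :=
  ∀ 𝔄 : Struct RSym ar, ∀ 𝕏 : Hyperteam Var 𝔄.A,
    OverSup 𝕏 (supv φ ∪ supv ψ) → sat 𝔄 φ fl 𝕏 → sat 𝔄 ψ fl 𝕏

/-- `φ ≅^fl ψ`: `fl`-equivalence between ADIF formulas. -/
noncomputable def EquivFlagF (fl : Flag) (φ ψ : Formula Var RSym ar) : Prop :=
  ImpliesF fl φ ψ ∧ ImpliesF fl ψ φ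

/-- `φ ≅ ψ`: equivalence for both alternation flags. -/
noncomputable def EquivF (φ ψ : Formula Var RSym ar) : Prop :=
  ∀ fl : Flag, EquivFlagF fl φ ψ

end ADIF

namespace ADIF

variable {Var RSym : Type} {ar : RSym → ℕ} {A : Type}

/-- A formula is atomic if it is `⊥`, `⊤` or a relational atom. -/
def IsAtomic : Formula Var RSym ar → Prop
  | .fls => True
  | .tru => True
  | .atom _ _ => True
  | _ => False

/-- Negation normal form: negation is applied only to atomic formulas. -/
def IsNNF : Formula Var RSym ar → Prop
  | .fls => True
  | .tru => True
  | .atom _ _ => True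
  | .not φ => IsAtomic φ
  | .and φ ψ => IsNNF φ ∧ IsNNF ψ
  | .or φ ψ => IsNNF φ ∧ IsNNF ψ
  | .ex _ _ _ φ => IsNNF φ
  | .all _ _ _ φ => IsNNF φ

/-- An item `Q^{±W}x` of a quantifier prefix: `q = true` means `∃`,
`q = false` means `∀`; `s = true` means `+W`, `s = false` means `−W`. -/
structure QItem (Var : Type) where
  q : Bool
  s : Bool
  W : Finset Var
  x : Var

/-- The constraint set of a quantifier-prefix item. -/
def QItem.constr (i : QItem Var) : Set Var := denot i.s i.W

/-- Well-formed quantifier prefixes: each variable is quantified at most once,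
does not occur in its own constraint set, and is not quantified in the scope of
a quantifier whose constraint set contains it. -/
def GoodPrefix : List (QItem Var) → Prop
  | [] => True
  | i :: rest =>
      i.x ∉ i.constr ∧ (∀ j ∈ rest, j.x ≠ i.x ∧ j.x ∉ i.constr) ∧ GoodPrefix rest

/-- Prefixing a formula by a quantifier prefix. -/
def applyPrefix : List (QItem Var) → Formula Var RSym ar → Formula Var RSym ar
  | [], φ => φ
  | i :: rest, φ =>
      if i.q then Formula.ex i.s i.W i.x (applyPrefix rest φ)
      else Formula.all i.s i.W i.x (applyPrefix rest φ)

/-- The extension operator `ext^fl(𝕏, Q^{±W}x)` for a single quantifier. -/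
noncomputable def extQ (fl : Flag) (𝕏 : Hyperteam Var A) (i : QItem Var) : Hyperteam Var A :=
  match fl, i.q with
  | .EA, true => extH (denot i.s i.W) 𝕏 i.x
  | .AE, false => extH (denot i.s i.W) 𝕏 i.x
  | .EA, false => dualH (extH (denot i.s i.W) (dualH 𝕏) i.x)
  | .AE, true => dualH (extH (denot i.s i.W) (dualH 𝕏) i.x)

/-- The extension operator `ext^fl(𝕏, ℘)` for a quantifier prefix. -/
noncomputable def extP (fl : Flag) : Hyperteam Var A → List (QItem Var) → Hyperteam Var A
  | 𝕏, [] => 𝕏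
  | 𝕏, i :: rest => extP fl (extQ fl 𝕏 i) rest

/-- Ordinary first-order formulas over the signature. -/
inductive FForm (Var RSym : Type) (ar : RSym → ℕ) : Type
  | fls : FForm Var RSym ar
  | tru : FForm Var RSym ar
  | atom (R : RSym) (xs : Fin (ar R) → Var) : FForm Var RSym ar
  | not (φ : FForm Var RSym ar) : FForm Var RSym ar
  | and (φ ψ : FForm Var RSym ar) : FForm Var RSym ar
  | or (φ ψ : FForm Var RSym ar) : FForm Var RSym ar
  | ex (x : Var) (φ : FForm Var RSym ar) : FForm Var RSym ar
  | all (x : Var) (φ : FForm Var RSym ar) : FForm Var RSym ar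

/-- Free variables of a first-order formula. -/
def folFree : FForm Var RSym ar → Set Var
  | .fls => ∅
  | .tru => ∅
  | .atom _ xs => Set.range xs
  | .not φ => folFree φ
  | .and φ ψ => folFree φ ∪ folFree ψ
  | .or φ ψ => folFree φ ∪ folFree ψ
  | .ex x φ => folFree φ \ {x}
  | .all x φ => folFree φ \ {x}

/-- Standard Tarskian satisfaction `𝔄, α ⊨_FOL φ` for first-order formulas. -/
noncomputable def folSat (𝔄 : Struct RSym ar) : FForm Var RSym ar → Asg Var 𝔄.A → Prop
  | .fls, _ => False
  | .tru, _ => True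
  | .atom R xs, α => atomSat 𝔄 R xs α
  | .not φ, α => ¬ folSat 𝔄 φ α
  | .and φ ψ, α => folSat 𝔄 φ α ∧ folSat 𝔄 ψ α
  | .or φ ψ, α => folSat 𝔄 φ α ∨ folSat 𝔄 ψ α
  | .ex x φ, α => ∃ a : 𝔄.A, folSat 𝔄 φ (updateA α x a)
  | .all x φ, α => ∀ a : 𝔄.A, folSat 𝔄 φ (updateA α x a)

/-- The FOL fragment of ADIF: every quantifier is `Q^{+W}x` with
`W = sup(φ) ∖ {x}`. -/
def IsFOLFrag : Formula Var RSym ar → Prop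
  | .fls => True
  | .tru => True
  | .atom _ _ => True
  | .not φ => IsFOLFrag φ
  | .and φ ψ => IsFOLFrag φ ∧ IsFOLFrag ψ
  | .or φ ψ => IsFOLFrag φ ∧ IsFOLFrag ψ
  | .ex s W x φ => s = true ∧ (↑W : Set Var) = supv φ \ {x} ∧ IsFOLFrag φ
  | .all s W x φ => s = true ∧ (↑W : Set Var) = supv φ \ {x} ∧ IsFOLFrag φ

/-- Tarskian satisfaction of an ADIF formula (in the FOL fragment) by an
assignment, quantifier decorations being ignored. -/
noncomputable def tarskiSat (𝔄 : Struct RSym ar) : Formula Var RSym ar → Asg Var 𝔄.A → Prop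
  | .fls, _ => False
  | .tru, _ => True
  | .atom R xs, α => atomSat 𝔄 R xs α
  | .not φ, α => ¬ tarskiSat 𝔄 φ α
  | .and φ ψ, α => tarskiSat 𝔄 φ α ∧ tarskiSat 𝔄 ψ α
  | .or φ ψ, α => tarskiSat 𝔄 φ α ∨ tarskiSat 𝔄 ψ α
  | .ex _ _ x φ, α => ∃ a : 𝔄.A, tarskiSat 𝔄 φ (updateA α x a)
  | .all _ _ x φ, α => ∀ a : 𝔄.A, tarskiSat 𝔄 φ (updateA α x a)

end ADIF

namespace ADIF

variable {Var RSym : Type} {ar : RSym → ℕ} {A : Type}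

lemma incl_refl' (𝕏 : Hyperteam Var A) : incl 𝕏 𝕏 := fun X hX => ⟨X, hX, subset_rfl⟩

lemma incl_extH' {𝕏 𝕐 : Hyperteam Var A} (h : incl 𝕏 𝕐) (W : Set Var) (x : Var) :
    incl (extH W 𝕏 x) (extH W 𝕐 x) := by
  rintro Z ⟨X, hX, F, hF, rfl⟩
  obtain ⟨Y, hY, hYX⟩ := h X hX
  exact ⟨extT Y F x, ⟨Y, hY, F, hF, rfl⟩, Set.image_mono hYX⟩

lemma incl_dual' {𝕏 𝕐 : Hyperteam Var A} (h : incl 𝕏 𝕐) : incl (dualH 𝕐) (dualH 𝕏) := by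
  rintro Z ⟨χ, hχ, rfl⟩
  classical
  refine ⟨(fun X => if hX : X ∈ 𝕏 then χ (h X hX).choose else emptyAsg Var A) '' 𝕏,
    ⟨_, ?_, rfl⟩, ?_⟩
  · intro X hX
    simp only [dif_pos hX]
    have hspec := (h X hX).choose_spec
    exact hspec.2 (hχ _ hspec.1)
  · rintro _ ⟨X, hX, rfl⟩
    simp only [dif_pos hX]
    exact ⟨_, (h X hX).choose_spec.1, rfl⟩

lemma incl_ddual_ge' (𝕏 : Hyperteam Var A) : incl 𝕏 (dualH (dualH 𝕏)) := by
  intro X hX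
  classical
  set ξ : Team Var A → Asg Var A :=
    fun Y => if h : ∃ α ∈ Y, α ∈ X then h.choose else emptyAsg Var A with hξ
  have key : ∀ Y ∈ dualH 𝕏, ξ Y ∈ Y ∧ ξ Y ∈ X := by
    rintro Y ⟨χ, hχ, rfl⟩
    have h : ∃ α ∈ χ '' 𝕏, α ∈ X := ⟨χ X, ⟨X, hX, rfl⟩, hχ X hX⟩
    simp only [hξ, dif_pos h]
    exact h.choose_spec
  refine ⟨ξ '' dualH 𝕏, ⟨ξ, fun Y hY => (key Y hY).1, rfl⟩, ?_⟩
  rintro _ ⟨Y, hY, rfl⟩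
  exact (key Y hY).2

lemma incl_ddual_le' (𝕏 : Hyperteam Var A) : incl (dualH (dualH 𝕏)) 𝕏 := by
  classical
  rintro Z ⟨ξ, hξ, rfl⟩
  by_contra hcon
  push_neg at hcon
  have hne : ∀ X ∈ 𝕏, ∃ α ∈ X, α ∉ ξ '' dualH 𝕏 := by
    intro X hX
    have := hcon X hX
    rw [Set.not_subset] at this
    exact this
  set χ : Team Var A → Asg Var A :=
    fun X => if h : ∃ α ∈ X, α ∉ ξ '' dualH 𝕏 then h.choose else emptyAsg Var A with hχdef
  have hspec : ∀ X ∈ 𝕏, χ X ∈ X ∧ χ X ∉ ξ '' dualH 𝕏 := by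
    intro X hX
    simp only [hχdef, dif_pos (hne X hX)]
    exact (hne X hX).choose_spec
  have hY₀ : χ '' 𝕏 ∈ dualH 𝕏 := ⟨χ, fun X hX => (hspec X hX).1, rfl⟩
  obtain ⟨X, hX, hXeq⟩ := hξ _ hY₀
  have h2 : ξ (χ '' 𝕏) ∈ ξ '' dualH 𝕏 := ⟨_, hY₀, rfl⟩
  rw [← hXeq] at h2
  exact (hspec X hX).2 h2

lemma bipart_transfer' {𝕏 𝕐 𝕐₁ 𝕐₂ : Hyperteam Var A} (h : incl 𝕏 𝕐)
    (hb : Bipartition 𝕐₁ 𝕐₂ 𝕐) :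
    ∃ 𝕏₁ 𝕏₂, Bipartition 𝕏₁ 𝕏₂ 𝕏 ∧ incl 𝕏₁ 𝕐₁ ∧ incl 𝕏₂ 𝕐₂ := by
  classical
  set f : Team Var A → Team Var A :=
    fun X => if hX : X ∈ 𝕏 then (h X hX).choose else ∅ with hf
  have hfspec : ∀ X ∈ 𝕏, f X ∈ 𝕐 ∧ f X ⊆ X := by
    intro X hX
    simp only [hf, dif_pos hX]
    exact (h X hX).choose_spec
  refine ⟨{X | X ∈ 𝕏 ∧ f X ∈ 𝕐₁}, {X | X ∈ 𝕏 ∧ f X ∉ 𝕐₁}, ⟨?_, ?_⟩, ?_, ?_⟩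
  · ext X
    simp only [Set.mem_inter_iff, Set.mem_setOf_eq, Set.mem_empty_iff_false, iff_false]
    rintro ⟨⟨_, h1⟩, ⟨_, h2⟩⟩
    exact h2 h1
  · ext X
    simp only [Set.mem_union, Set.mem_setOf_eq]
    constructor
    · rintro (⟨hX, _⟩ | ⟨hX, _⟩) <;> exact hX
    · intro hX
      by_cases hc : f X ∈ 𝕐₁
      · exact Or.inl ⟨hX, hc⟩
      · exact Or.inr ⟨hX, hc⟩
  · rintro X ⟨hX, h1⟩
    exact ⟨f X, h1, (hfspec X hX).2⟩
  · rintro X ⟨hX, h1⟩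
    have : f X ∈ 𝕐₁ ∪ 𝕐₂ := hb.2 ▸ (hfspec X hX).1
    rcases this with h' | h'
    · exact absurd h' h1
    · exact ⟨f X, h', (hfspec X hX).2⟩

lemma bip_mono' {P Q : Hyperteam Var A → Prop}
    (hP : ∀ 𝕏 𝕐, incl 𝕏 𝕐 → P 𝕏 → P 𝕐) (hQ : ∀ 𝕏 𝕐, incl 𝕏 𝕐 → Q 𝕏 → Q 𝕐)
    {𝕏 𝕐 : Hyperteam Var A} (h : incl 𝕏 𝕐)
    (hs : ∀ 𝕏₁ 𝕏₂, Bipartition 𝕏₁ 𝕏₂ 𝕏 → P 𝕏₁ ∨ Q 𝕏₂) :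
    ∀ 𝕐₁ 𝕐₂, Bipartition 𝕐₁ 𝕐₂ 𝕐 → P 𝕐₁ ∨ Q 𝕐₂ := by
  intro 𝕐₁ 𝕐₂ hb
  obtain ⟨𝕏₁, 𝕏₂, hbX, h1, h2⟩ := bipart_transfer' h hb
  rcases hs 𝕏₁ 𝕏₂ hbX with hp | hq
  · exact Or.inl (hP _ _ h1 hp)
  · exact Or.inr (hQ _ _ h2 hq)

lemma bip_anti' {P Q : Hyperteam Var A → Prop}
    (hP : ∀ 𝕏 𝕐, incl 𝕏 𝕐 → P 𝕐 → P 𝕏) (hQ : ∀ 𝕏 𝕐, incl 𝕏 𝕐 → Q 𝕐 → Q 𝕏)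
    {𝕏 𝕐 : Hyperteam Var A} (h : incl 𝕏 𝕐)
    (hs : ∃ 𝕐₁ 𝕐₂, Bipartition 𝕐₁ 𝕐₂ 𝕐 ∧ P 𝕐₁ ∧ Q 𝕐₂) :
    ∃ 𝕏₁ 𝕏₂, Bipartition 𝕏₁ 𝕏₂ 𝕏 ∧ P 𝕏₁ ∧ Q 𝕏₂ := by
  obtain ⟨𝕐₁, 𝕐₂, hb, hp, hq⟩ := hs
  obtain ⟨𝕏₁, 𝕏₂, hbX, h1, h2⟩ := bipart_transfer' h hb
  exact ⟨𝕏₁, 𝕏₂, hbX, hP _ _ h1 hp, hQ _ _ h2 hq⟩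

lemma sat_mono' (𝔄 : Struct RSym ar) (φ : Formula Var RSym ar) :
    (∀ 𝕏 𝕐 : Hyperteam Var 𝔄.A, incl 𝕏 𝕐 → sat 𝔄 φ .EA 𝕏 → sat 𝔄 φ .EA 𝕐) ∧
    (∀ 𝕏 𝕐 : Hyperteam Var 𝔄.A, incl 𝕏 𝕐 → sat 𝔄 φ .AE 𝕐 → sat 𝔄 φ .AE 𝕏) := by
  induction φ with
  | fls =>
    constructor
    · intro 𝕏 𝕐 h hs
      simp only [sat] at hs ⊢
      obtain ⟨Y, hY, hsub⟩ := h ∅ hs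
      rwa [Set.subset_empty_iff.1 hsub] at hY
    · intro 𝕏 𝕐 h hs
      simp only [sat] at hs ⊢
      ext X
      simp only [Set.mem_empty_iff_false, iff_false]
      intro hX
      obtain ⟨Y, hY, _⟩ := h X hX
      rw [hs] at hY
      exact hY
  | tru =>
    constructor
    · intro 𝕏 𝕐 h hs
      simp only [sat] at hs ⊢
      obtain ⟨X, hX⟩ := Set.nonempty_iff_ne_empty.2 hs
      obtain ⟨Y, hY, _⟩ := h X hX
      exact Set.nonempty_iff_ne_empty.1 ⟨Y, hY⟩
    · intro 𝕏 𝕐 h hs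
      simp only [sat] at hs ⊢
      intro hX
      obtain ⟨Y, hY, hsub⟩ := h ∅ hX
      rw [Set.subset_empty_iff.1 hsub] at hY
      exact hs hY
  | atom R xs =>
    constructor
    · rintro 𝕏 𝕐 h ⟨X, hX, hall⟩
      obtain ⟨Y, hY, hsub⟩ := h X hX
      exact ⟨Y, hY, fun α hα => hall α (hsub hα)⟩
    · intro 𝕏 𝕐 h hs X hX
      obtain ⟨Y, hY, hsub⟩ := h X hX
      obtain ⟨α, hα, hsat⟩ := hs Y hY
      exact ⟨α, hsub hα, hsat⟩
  | not φ ih =>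
    constructor
    · intro 𝕏 𝕐 h hs
      simp only [sat, Flag.dual] at hs ⊢
      exact fun hc => hs (ih.2 𝕏 𝕐 h hc)
    · intro 𝕏 𝕐 h hs
      simp only [sat, Flag.dual] at hs ⊢
      exact fun hc => hs (ih.1 𝕏 𝕐 h hc)
  | and φ ψ ihφ ihψ =>
    constructor
    · intro 𝕏 𝕐 h hs
      exact bip_mono' ihφ.1 ihψ.1 h hs
    · intro 𝕏 𝕐 h hs
      exact bip_mono' ihφ.1 ihψ.1 (incl_dual' h) hs
  | or φ ψ ihφ ihψ =>
    constructor
    · intro 𝕏 𝕐 h hs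
      exact bip_anti' ihφ.2 ihψ.2 (incl_dual' h) hs
    · intro 𝕏 𝕐 h hs
      exact bip_anti' ihφ.2 ihψ.2 h hs
  | ex s W x φ ih =>
    constructor
    · intro 𝕏 𝕐 h hs
      exact ih.1 _ _ (incl_extH' h _ _) hs
    · intro 𝕏 𝕐 h hs
      exact ih.1 _ _ (incl_extH' (incl_dual' h) _ _) hs
  | all s W x φ ih =>
    constructor
    · intro 𝕏 𝕐 h hs
      exact ih.2 _ _ (incl_extH' (incl_dual' h) _ _) hs
    · intro 𝕏 𝕐 h hs
      exact ih.2 _ _ (incl_extH' h _ _) hs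

lemma sat_ddual' (𝔄 : Struct RSym ar) (φ : Formula Var RSym ar) (fl : Flag)
    (𝕏 : Hyperteam Var 𝔄.A) : sat 𝔄 φ fl 𝕏 ↔ sat 𝔄 φ fl (dualH (dualH 𝕏)) := by
  cases fl
  · exact ⟨(sat_mono' 𝔄 φ).1 _ _ (incl_ddual_ge' 𝕏), (sat_mono' 𝔄 φ).1 _ _ (incl_ddual_le' 𝕏)⟩
  · exact ⟨(sat_mono' 𝔄 φ).2 _ _ (incl_ddual_le' 𝕏), (sat_mono' 𝔄 φ).2 _ _ (incl_ddual_ge' 𝕏)⟩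

lemma empty_mem_dual' (𝕏 : Hyperteam Var A) : ∅ ∈ dualH 𝕏 ↔ 𝕏 = ∅ := by
  constructor
  · rintro ⟨χ, hχ, heq⟩
    exact Set.image_eq_empty.1 heq.symm
  · rintro rfl
    exact ⟨fun _ => emptyAsg Var A, fun X hX => absurd hX (Set.notMem_empty _),
      (Set.image_empty _).symm⟩

lemma dual_eq_empty' (𝕏 : Hyperteam Var A) : dualH 𝕏 = ∅ ↔ ∅ ∈ 𝕏 := by
  constructor
  · intro h
    by_contra hc
    classical
    have hχ : ∀ X ∈ 𝕏, (fun X => if hx : Set.Nonempty X then hx.choose else emptyAsg Var A) X ∈ X := by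
      intro X hX
      have hx : Set.Nonempty X := Set.nonempty_iff_ne_empty.2 (fun he => hc (he ▸ hX))
      simp only [dif_pos hx]
      exact hx.choose_spec
    have : _ ∈ dualH 𝕏 := ⟨_, hχ, rfl⟩
    rw [h] at this
    exact this
  · intro h
    ext Y
    simp only [Set.mem_empty_iff_false, iff_false]
    rintro ⟨χ, hχ, rfl⟩
    exact absurd (hχ ∅ h) (Set.notMem_empty _)

lemma atom_dual_EA' (𝔄 : Struct RSym ar) (R : RSym) (xs : Fin (ar R) → Var)
    (𝕏 : Hyperteam Var 𝔄.A) :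
    (∃ X ∈ 𝕏, ∀ α ∈ X, atomSat 𝔄 R xs α) ↔
      (∀ Y ∈ dualH 𝕏, ∃ α ∈ Y, atomSat 𝔄 R xs α) := by
  constructor
  · rintro ⟨X, hX, hall⟩ Y ⟨χ, hχ, rfl⟩
    exact ⟨χ X, ⟨X, hX, rfl⟩, hall _ (hχ X hX)⟩
  · intro h
    by_contra hcon
    push_neg at hcon
    classical
    set χ : Team Var 𝔄.A → Asg Var 𝔄.A :=
      fun X => if hx : ∃ α ∈ X, ¬ atomSat 𝔄 R xs α then hx.choose else emptyAsg Var 𝔄.A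
      with hχdef
    have hmem : ∀ X ∈ 𝕏, χ X ∈ X ∧ ¬ atomSat 𝔄 R xs (χ X) := by
      intro X hX
      obtain ⟨α, hα1, hα2⟩ := hcon X hX
      have hx : ∃ α ∈ X, ¬ atomSat 𝔄 R xs α := ⟨α, hα1, hα2⟩
      simp only [hχdef, dif_pos hx]
      exact hx.choose_spec
    obtain ⟨β, ⟨X, hX, rfl⟩, hβ⟩ := h (χ '' 𝕏) ⟨χ, fun X hX => (hmem X hX).1, rfl⟩
    exact (hmem X hX).2 hβ

lemma atom_dual_AE' (𝔄 : Struct RSym ar) (R : RSym) (xs : Fin (ar R) → Var)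
    (𝕏 : Hyperteam Var 𝔄.A) :
    (∀ X ∈ 𝕏, ∃ α ∈ X, atomSat 𝔄 R xs α) ↔
      (∃ Y ∈ dualH 𝕏, ∀ α ∈ Y, atomSat 𝔄 R xs α) := by
  constructor
  · intro h
    classical
    set χ : Team Var 𝔄.A → Asg Var 𝔄.A :=
      fun X => if hx : ∃ α ∈ X, atomSat 𝔄 R xs α then hx.choose else emptyAsg Var 𝔄.A
      with hχdef
    have hmem : ∀ X ∈ 𝕏, χ X ∈ X ∧ atomSat 𝔄 R xs (χ X) := by
      intro X hX
      have hx := h X hX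
      simp only [hχdef, dif_pos hx]
      exact hx.choose_spec
    refine ⟨χ '' 𝕏, ⟨χ, fun X hX => (hmem X hX).1, rfl⟩, ?_⟩
    rintro _ ⟨X, hX, rfl⟩
    exact (hmem X hX).2
  · rintro ⟨Y, ⟨χ, hχ, rfl⟩, hall⟩ X hX
    exact ⟨χ X, hχ X hX, hall _ ⟨X, hX, rfl⟩⟩

lemma sat_dual' (𝔄 : Struct RSym ar) (φ : Formula Var RSym ar) (fl : Flag)
    (𝕏 : Hyperteam Var 𝔄.A) : sat 𝔄 φ fl 𝕏 ↔ sat 𝔄 φ fl.dual (dualH 𝕏) := by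
  induction φ generalizing fl 𝕏 with
  | fls =>
    cases fl
    · simp only [sat, Flag.dual]
      exact (dual_eq_empty' 𝕏).symm
    · simp only [sat, Flag.dual]
      exact (empty_mem_dual' 𝕏).symm
  | tru =>
    cases fl
    · simp only [sat, Flag.dual]
      exact not_iff_not.2 (empty_mem_dual' 𝕏).symm |>.symm |>.symm
    · simp only [sat, Flag.dual]
      exact not_iff_not.2 (dual_eq_empty' 𝕏).symm |>.symm |>.symm
  | atom R xs =>
    cases fl
    · exact atom_dual_EA' 𝔄 R xs 𝕏
    · exact atom_dual_AE' 𝔄 R xs 𝕏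
  | not φ ih =>
    have hd : fl.dual.dual = fl := by cases fl <;> rfl
    simp only [sat]
    rw [hd]
    exact not_congr (by rw [ih fl.dual 𝕏, hd])
  | and φ ψ ihφ ihψ =>
    cases fl
    · exact sat_ddual' 𝔄 (.and φ ψ) .EA 𝕏
    · exact Iff.rfl
  | or φ ψ ihφ ihψ =>
    cases fl
    · exact Iff.rfl
    · exact sat_ddual' 𝔄 (.or φ ψ) .AE 𝕏
  | ex s W x φ ih =>
    cases fl
    · exact sat_ddual' 𝔄 (.ex s W x φ) .EA 𝕏
    · exact Iff.rfl
  | all s W x φ ih =>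
    cases fl
    · exact Iff.rfl
    · exact sat_ddual' 𝔄 (.all s W x φ) .AE 𝕏

lemma xor_self_not' (P : Prop) : Xor' P (¬ P) := by
  by_cases h : P
  · exact Or.inl ⟨h, not_not_intro h⟩
  · exact Or.inr ⟨h, h⟩

/-- Game-Theoretic Determinacy. -/
theorem game_theoretic_determinacy {Var RSym : Type} {ar : RSym → ℕ}
    (𝔄 : Struct RSym ar) (φ : Formula Var RSym ar)
    (𝕏 : Hyperteam Var 𝔄.A) (h𝕏 : OverSup 𝕏 (supv φ)) (fl : Flag) :
    Xor' (sat 𝔄 φ fl 𝕏) (sat 𝔄 (Formula.not φ) fl.dual 𝕏) ∧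
    Xor' (sat 𝔄 φ fl 𝕏) (sat 𝔄 (Formula.not φ) fl (dualH 𝕏)) := by
  have hd : fl.dual.dual = fl := by cases fl <;> rfl
  constructor
  · have e1 : sat 𝔄 (Formula.not φ) fl.dual 𝕏 ↔ ¬ sat 𝔄 φ fl 𝕏 := by
      simp only [sat, hd]
    rw [e1]
    exact xor_self_not' _
  · have e2 : sat 𝔄 (Formula.not φ) fl (dualH 𝕏) ↔ ¬ sat 𝔄 φ fl 𝕏 := by
      simp only [sat]
      exact not_congr (sat_dual' 𝔄 φ fl 𝕏).symm
    rw [e2]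
    exact xor_self_not' _

end ADIF
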